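/- Let 1 ≤ t, t′ ≤ n−1 and r, r′ ∈ ℤ. Then V(t,r) ≅ V(t′,r′) as H-modules if and only if t = t′ and r ≡ r′ (mod n). -/

import Mathlib

open scoped TensorProduct

noncomputable section

namespace SmallQuasiQuantumGroup

variable (k : Type) [Field k]

inductive QGRel (n : ℕ) (q : k) :
    FreeAlgebra k (Fin 4) → FreeAlgebra k (Fin 4) → Prop
  | KKinv : QGRel n q (FreeAlgebra.ι k 2 * FreeAlgebra.ι k 3) 1
  | KinvK : QGRel n q (FreeAlgebra.ι k 3 * FreeAlgebra.ι k 2) 1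
  | KE : QGRel n q (FreeAlgebra.ι k 2 * FreeAlgebra.ι k 0 * FreeAlgebra.ι k 3)
      (q ^ 2 • FreeAlgebra.ι k 0)
  | KF : QGRel n q (FreeAlgebra.ι k 2 * FreeAlgebra.ι k 1 * FreeAlgebra.ι k 3)
      ((q ^ 2)⁻¹ • FreeAlgebra.ι k 1)
  | EF : QGRel n q
      (FreeAlgebra.ι k 0 * FreeAlgebra.ι k 1 - FreeAlgebra.ι k 1 * FreeAlgebra.ι k 0)
      ((q - q⁻¹)⁻¹ • (FreeAlgebra.ι k 2 - FreeAlgebra.ι k 3))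
  | Epow : QGRel n q (FreeAlgebra.ι k 0 ^ n) 0
  | Fpow : QGRel n q (FreeAlgebra.ι k 1 ^ n) 0
  | Kpow : QGRel n q (FreeAlgebra.ι k 2 ^ n ^ 2) 1

def QG (n : ℕ) (q : k) : Type := RingQuot (QGRel k n q)

instance (n : ℕ) (q : k) : Ring (QG k n q) := inferInstanceAs (Ring (RingQuot _))
instance (n : ℕ) (q : k) : Algebra k (QG k n q) := inferInstanceAs (Algebra k (RingQuot _))

def gE (n : ℕ) (q : k) : QG k n q := RingQuot.mkAlgHom k (QGRel k n q) (FreeAlgebra.ι k 0)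
def gF (n : ℕ) (q : k) : QG k n q := RingQuot.mkAlgHom k (QGRel k n q) (FreeAlgebra.ι k 1)
def gK (n : ℕ) (q : k) : QG k n q := RingQuot.mkAlgHom k (QGRel k n q) (FreeAlgebra.ι k 2)
def gKi (n : ℕ) (q : k) : QG k n q := RingQuot.mkAlgHom k (QGRel k n q) (FreeAlgebra.ι k 3)

def eIdem (n : ℕ) (q : k) (i : ℕ) : QG k n q :=
  (n : k)⁻¹ • ∑ t ∈ Finset.range n, q ^ (t * i) • gK k n q ^ (t * n)

/-! ### The simple modules `V(t,r)` and `V_l` -/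

/-- The scalar `γ_j` appearing in the `F`-action on the module `V(t,r)`
(here `q = Q^n` where `Q = 𝐪` is the primitive `n²`-th root of unity). -/
def gammaCoef (n : ℕ) (Q : k) (t : ℕ) (r : ℤ) (j : ℕ) : k :=
  (Q ^ n - (Q ^ n)⁻¹)⁻¹ *
    (Q ^ (-(t : ℤ)) * ((Q ^ n) ^ (-(2 * r)) - (Q ^ n) ^ (-(2 * (r + (j : ℤ))))) /
        (1 - (Q ^ n) ^ (-2 : ℤ)) -
      Q ^ (t : ℤ) * ((Q ^ n) ^ (2 * r) - (Q ^ n) ^ (2 * (r + (j : ℤ)))) /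
        (1 - (Q ^ n) ^ (2 : ℤ)))

/-- `IsTypeV k n Q t r V` says that the `H`-module `V` is (a copy of) the `n`-dimensional
module `V(t,r)`: it has a `k`-basis `v₀, …, v_{n-1}` (indexed here from `0`, corresponding to
`v₁, …, v_n` in the paper) with `K vᵢ = 𝐪^t q^{2(r+i)} vᵢ`, `E vᵢ = vᵢ₊₁` (`E v_{n-1} = 0`),
`F v₀ = 0` and `F vᵢ = γ_i v_{i-1}` for `i ≥ 1`. -/
def IsTypeV (n : ℕ) (Q : k) (t : ℕ) (r : ℤ) (V : Type) [AddCommGroup V] [Module k V]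
    [Module (QG k n (Q ^ n)) V] : Prop :=
  ∃ v : Module.Basis (Fin n) k V,
    (∀ i : Fin n, gK k n (Q ^ n) • v i =
      (Q ^ (t : ℤ) * (Q ^ n) ^ (2 * (r + (i.1 : ℤ)))) • v i) ∧
    (∀ i : Fin n, gE k n (Q ^ n) • v i = if h : i.1 + 1 < n then v ⟨i.1 + 1, h⟩ else 0) ∧
    (∀ i : Fin n, i.1 = 0 → gF k n (Q ^ n) • v i = 0) ∧
    (∀ i : Fin n, 0 < i.1 → gF k n (Q ^ n) • v i =
      gammaCoef k n Q t r i.1 • v ⟨i.1 - 1, lt_of_le_of_lt (Nat.sub_le _ _) i.2⟩)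

/-- The scalar `β_i(l)` appearing in the `F`-action on the simple module `V_l`. -/
def betaCoef (n : ℕ) (Q : k) (l i : ℕ) : k :=
  (∑ s ∈ Finset.range i, (Q ^ n) ^ (2 * s)) * (1 - (Q ^ n) ^ (2 * ((i : ℤ) - (l : ℤ)))) /
    ((Q ^ n) ^ (2 * (i : ℤ) - (l : ℤ)) - (Q ^ n) ^ (2 * (i : ℤ) - (l : ℤ) - 2))

/-- `IsTypeVl k n Q l V` says that the `H`-module `V` is (a copy of) the `l`-dimensional
simple module `V_l`: it has a `k`-basis `m₀, …, m_{l-1}` (indexed here from `0`, corresponding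
to `m₁, …, m_l` in the paper) with `K mᵢ = q^{2i+1-l} mᵢ`, `E mᵢ = mᵢ₊₁` (`E m_{l-1} = 0`),
`F m₀ = 0` and `F mᵢ = β_i(l) m_{i-1}` for `i ≥ 1`. -/
def IsTypeVl (n : ℕ) (Q : k) (l : ℕ) (V : Type) [AddCommGroup V] [Module k V]
    [Module (QG k n (Q ^ n)) V] : Prop :=
  ∃ m : Module.Basis (Fin l) k V,
    (∀ i : Fin l, gK k n (Q ^ n) • m i = (Q ^ n) ^ (2 * (i.1 : ℤ) + 1 - (l : ℤ)) • m i) ∧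
    (∀ i : Fin l, gE k n (Q ^ n) • m i = if h : i.1 + 1 < l then m ⟨i.1 + 1, h⟩ else 0) ∧
    (∀ i : Fin l, i.1 = 0 → gF k n (Q ^ n) • m i = 0) ∧
    (∀ i : Fin l, 0 < i.1 → gF k n (Q ^ n) • m i =
      betaCoef k n Q l i.1 • m ⟨i.1 - 1, lt_of_le_of_lt (Nat.sub_le _ _) i.2⟩)

/-! ### Corner algebras `He_i` -/

/-- For a central idempotent `a`, the set `{x | xa = x ∧ ax = x}` (which equals `Ra`)
is a `k`-submodule of `R`. -/
def cornerSubmodule (R : Type) [Ring R] [Algebra k R] (a : R) : Submodule k R where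
  carrier := {x | x * a = x ∧ a * x = x}
  add_mem' := fun hx hy => ⟨by rw [add_mul, hx.1, hy.1], by rw [mul_add, hx.2, hy.2]⟩
  zero_mem' := ⟨zero_mul a, mul_zero a⟩
  smul_mem' := fun c x hx => ⟨by rw [smul_mul_assoc, hx.1], by rw [mul_smul_comm, hx.2]⟩

/-- The corner ring `Ra = {x | xa = x ∧ ax = x}` of an idempotent `a`; it is a `k`-algebra
with identity element `a`. -/
def Corner (R : Type) [Ring R] [Algebra k R] (a : R) (_ : IsIdempotentElem a) : Type :=
  ↥(cornerSubmodule k R a)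

namespace Corner

variable {R : Type} [Ring R] [Algebra k R] {a : R} {ha : IsIdempotentElem a}

instance : AddCommGroup (Corner k R a ha) :=
  inferInstanceAs (AddCommGroup ↥(cornerSubmodule k R a))

instance : Module k (Corner k R a ha) :=
  inferInstanceAs (Module k ↥(cornerSubmodule k R a))

/-- The underlying element of `R` of an element of the corner ring. -/
def val (x : Corner k R a ha) : R := Subtype.val x

instance : Ring (Corner k R a ha) :=
  { (inferInstanceAs (AddCommGroup ↥(cornerSubmodule k R a)) :
      AddCommGroup ↥(cornerSubmodule k R a)) with
    mul := fun x y => ⟨x.1 * y.1,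
      by rw [mul_assoc, y.2.1], by rw [← mul_assoc, x.2.2]⟩
    one := ⟨a, ha, ha⟩
    mul_assoc := fun x y z => Subtype.ext (mul_assoc x.1 y.1 z.1)
    one_mul := fun x => Subtype.ext x.2.2
    mul_one := fun x => Subtype.ext x.2.1
    left_distrib := fun x y z => Subtype.ext (mul_add x.1 y.1 z.1)
    right_distrib := fun x y z => Subtype.ext (add_mul x.1 y.1 z.1)
    zero_mul := fun x => Subtype.ext (zero_mul x.1)
    mul_zero := fun x => Subtype.ext (mul_zero x.1) }

instance : Algebra k (Corner k R a ha) :=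
  @Algebra.ofModule k (Corner k R a ha) _ _ (inferInstanceAs (Module k ↥(cornerSubmodule k R a)))
    (fun c x y => Subtype.ext (smul_mul_assoc c x.1 y.1))
    (fun c x y => Subtype.ext (mul_smul_comm c x.1 y.1))

end Corner
/-! ### The comultiplication data -/

/-- The idempotent `1_s = (1/n²) ∑_{r=0}^{n²-1} 𝐪^{sr} K^r` of `H`. -/
def oneIdem (n : ℕ) (Q : k) (s : ℕ) : QG k n (Q ^ n) :=
  ((n : k) ^ 2)⁻¹ • ∑ r ∈ Finset.range (n ^ 2), Q ^ (s * r) • gK k n (Q ^ n) ^ r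

/-- `T₁ = ∑_{i=0}^{2n-1} 1_i`. -/
def Tone (n : ℕ) (Q : k) : QG k n (Q ^ n) := ∑ i ∈ Finset.range (2 * n), oneIdem k n Q i
/-- `T₂ = ∑_{i=2n}^{n²-1} 1_i`. -/
def Ttwo (n : ℕ) (Q : k) : QG k n (Q ^ n) := ∑ i ∈ Finset.Ico (2 * n) (n ^ 2), oneIdem k n Q i
/-- `T₃ = ∑_{i=0}^{n²-2n-1} 1_i`. -/
def Tthree (n : ℕ) (Q : k) : QG k n (Q ^ n) :=
  ∑ i ∈ Finset.range (n ^ 2 - 2 * n), oneIdem k n Q i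
/-- `T₄ = ∑_{i=n²-2n}^{n²-1} 1_i`. -/
def Tfour (n : ℕ) (Q : k) : QG k n (Q ^ n) :=
  ∑ i ∈ Finset.Ico (n ^ 2 - 2 * n) (n ^ 2), oneIdem k n Q i

/-- `IsDelta k n Q Δ` says that the `k`-algebra map `Δ : H → H ⊗ H` is the comultiplication
of the small quasi-quantum group, i.e. takes the prescribed values on `K`, `K⁻¹`, `E`, `F`. -/
def IsDelta (n : ℕ) (Q : k)
    (Δ : QG k n (Q ^ n) →ₐ[k] QG k n (Q ^ n) ⊗[k] QG k n (Q ^ n)) : Prop :=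
  Δ (gK k n (Q ^ n)) = gK k n (Q ^ n) ⊗ₜ[k] gK k n (Q ^ n) ∧
  Δ (gKi k n (Q ^ n)) = gKi k n (Q ^ n) ⊗ₜ[k] gKi k n (Q ^ n) ∧
  Δ (gE k n (Q ^ n)) =
    (gE k n (Q ^ n) ⊗ₜ[k] 1) *
        (Tone k n Q ⊗ₜ[k] gK k n (Q ^ n) ^ (n ^ 2 - n) + Ttwo k n Q ⊗ₜ[k] 1) +
      gK k n (Q ^ n) ⊗ₜ[k] gE k n (Q ^ n) ∧
  Δ (gF k n (Q ^ n)) =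
    (gF k n (Q ^ n) ⊗ₜ[k] 1) *
        (Tthree k n Q ⊗ₜ[k] gK k n (Q ^ n) ^ (n ^ 2 - 1) +
          Tfour k n Q ⊗ₜ[k] gK k n (Q ^ n) ^ (n - 1)) +
      1 ⊗ₜ[k] gF k n (Q ^ n)

/-- The action of an algebra `A` on a module `M`, as a `k`-linear map `A →ₗ[k] (M →ₗ[k] M)`. -/
def endoMap (A M : Type) [Ring A] [Algebra k A] [AddCommGroup M] [Module k M] [Module A M]
    [IsScalarTower k A M] : A →ₗ[k] M →ₗ[k] M where
  toFun a :=
    { toFun := fun m => a • m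
      map_add' := fun _ _ => smul_add _ _ _
      map_smul' := fun c m => smul_comm a c m }
  map_add' a b := LinearMap.ext fun m => add_smul a b m
  map_smul' c a := LinearMap.ext fun m => smul_assoc c a m

/-- `SmulViaDelta k n Q Δ M N` says that the given `H`-module structure on `M ⊗[k] N` is the
one obtained from the `H`-module structures of `M` and `N` through the comultiplication `Δ`:
`h` acts on `M ⊗ N` as the operator `(ρ_M ⊗ ρ_N)(Δ(h))`. -/
def SmulViaDelta (n : ℕ) (Q : k)
    (Δ : QG k n (Q ^ n) →ₐ[k] QG k n (Q ^ n) ⊗[k] QG k n (Q ^ n)) (M N : Type)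
    [AddCommGroup M] [Module k M] [Module (QG k n (Q ^ n)) M]
    [IsScalarTower k (QG k n (Q ^ n)) M]
    [AddCommGroup N] [Module k N] [Module (QG k n (Q ^ n)) N]
    [IsScalarTower k (QG k n (Q ^ n)) N]
    [Module (QG k n (Q ^ n)) (M ⊗[k] N)] : Prop :=
  ∀ (h : QG k n (Q ^ n)) (x : M ⊗[k] N),
    h • x = TensorProduct.homTensorHomMap (RingHom.id k) M N M N
      (TensorProduct.map (endoMap k (QG k n (Q ^ n)) M) (endoMap k (QG k n (Q ^ n)) N)
        (Δ h)) x

/-! ### The elements `T^i_j` and `A^{ij}_k` -/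

/-- The idempotent `T^i_j = (1/n) ∑_{s=0}^{n-1} 𝐪^{((j-1)n+i)s} K^s e_i` of `He_i`. -/
def Tij (n : ℕ) (Q : k) (i j : ℕ) : QG k n (Q ^ n) :=
  (n : k)⁻¹ • ∑ s ∈ Finset.range n,
    Q ^ (((j - 1) * n + i) * s) • (gK k n (Q ^ n) ^ s * eIdem k n (Q ^ n) i)

/-- The scalar `a^{ij}_{k1}` for `k ≥ 2`. -/
def aOne (n : ℕ) (Q : k) (i j kk : ℕ) : k :=
  ((Q ^ n) ^ (2 * ((kk : ℤ) - 1)) * Q ^ ((1 - (j : ℤ)) * n - (i : ℤ)) -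
      (Q ^ n) ^ (2 * (1 - (kk : ℤ))) * Q ^ ((i : ℤ) - (1 - (j : ℤ)) * n)) /
    (Q ^ n - (Q ^ n)⁻¹)

/-- The scalars `a^{ij}_{ks}` (`1 ≤ s ≤ k ≤ n`), defined by `a^{ij}_{kk} = 1`,
`a^{ij}_{k1}` as in `aOne`, and the recursion `a^{ij}_{ks} = a^{ij}_{k1} + a^{ij}_{k-1,s-1}`. -/
def aCoef (n : ℕ) (Q : k) (i j : ℕ) : ℕ → ℕ → k
  | _, 0 => 0
  | kk, 1 => if kk = 1 then 1 else aOne k n Q i j kk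
  | kk, s + 2 => if kk = s + 2 then 1 else aOne k n Q i j kk + aCoef n Q i j (kk - 1) (s + 1)

/-- The element `A^{ij}_k = ∑_{p=0}^{k-1} (∏_{t=0}^{p} a^{ij}_{k,k-t}) E^{k-1-p} F^{n-1-p} e_i`
of `H`. -/
def Aelem (n : ℕ) (Q : k) (i j kk : ℕ) : QG k n (Q ^ n) :=
  ∑ p ∈ Finset.range kk,
    (∏ t ∈ Finset.range (p + 1), aCoef k n Q i j kk (kk - t)) •
      (gE k n (Q ^ n) ^ (kk - 1 - p) * gF k n (Q ^ n) ^ (n - 1 - p) * eIdem k n (Q ^ n) i)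

/-- The integer `r_{k,j}`. -/
def rkj (n kk j : ℕ) : ℤ :=
  if (2 * (kk : ℤ) - (j : ℤ)) % 2 = 0 then (2 * (kk : ℤ) - (j : ℤ)) / 2
  else ((n : ℤ) + 2 * (kk : ℤ) - (j : ℤ)) / 2

/-! ### The algebra `B_i` of Statement 1 -/

/-- Defining relations of the algebra `B_i`, on the generators
`0 ↦ x`, `1 ↦ y`, `2 ↦ z`, `3 ↦ z'`. -/
inductive BRel (n i : ℕ) (q : k) :
    FreeAlgebra k (Fin 4) → FreeAlgebra k (Fin 4) → Prop
  | zz' : BRel n i q (FreeAlgebra.ι k 2 * FreeAlgebra.ι k 3) 1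
  | z'z : BRel n i q (FreeAlgebra.ι k 3 * FreeAlgebra.ι k 2) 1
  | zx : BRel n i q (FreeAlgebra.ι k 2 * FreeAlgebra.ι k 0 * FreeAlgebra.ι k 3)
      (q ^ 2 • FreeAlgebra.ι k 0)
  | zy : BRel n i q (FreeAlgebra.ι k 2 * FreeAlgebra.ι k 1 * FreeAlgebra.ι k 3)
      ((q ^ 2)⁻¹ • FreeAlgebra.ι k 1)
  | xy : BRel n i q
      (FreeAlgebra.ι k 0 * FreeAlgebra.ι k 1 - FreeAlgebra.ι k 1 * FreeAlgebra.ι k 0)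
      ((q - q⁻¹)⁻¹ • (FreeAlgebra.ι k 2 - FreeAlgebra.ι k 3))
  | xpow : BRel n i q (FreeAlgebra.ι k 0 ^ n) 0
  | ypow : BRel n i q (FreeAlgebra.ι k 1 ^ n) 0
  | zpow : BRel n i q (FreeAlgebra.ι k 2 ^ n) (q ^ (n - i) • 1)

end SmallQuasiQuantumGroup

/-! An isomorphism `V(t,r) ≅ V(t',r')` maps the kernel of `E`, which is the line spanned by the
top basis vector, onto the kernel of `E`; so the eigenvalues `𝐪^(t + 2n(r+n-1))` and
`𝐪^(t' + 2n(r'+n-1))` of `K` on these lines agree. Hence `n² ∣ (t - t') + 2n(r - r')`, which for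
`0 ≤ t, t' < n` and `n` odd forces `t = t'` and `r ≡ r' (mod n)`. Conversely, all structure
constants of `V(t,r)` depend on `r` only modulo `n`, and the map matching the standard bases of
two modules with the same structure constants commutes with `E`, `F`, `K`, hence with `K⁻¹` and
all of `H`. -/

section CommutingMaps

variable {R A V W : Type*} [CommSemiring R] [Semiring A] [Algebra R A]
  [AddCommMonoid V] [Module R V] [Module A V] [IsScalarTower R A V]
  [AddCommMonoid W] [Module R W] [Module A W] [IsScalarTower R A W]

theorem LinearMap.map_smul_of_map_smul_basis {ι : Type*} (b : Module.Basis ι R V)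
    (g : V →ₗ[R] W) (a : A) (h : ∀ i, g (a • b i) = a • g (b i)) (x : V) :
    g (a • x) = a • g x :=
  LinearMap.congr_fun (b.ext (f₁ := g ∘ₗ DistribSMul.toLinearMap R V a)
    (f₂ := DistribSMul.toLinearMap R W a ∘ₗ g) h) x

theorem LinearMap.map_smul_of_adjoin_eq_top {S : Set A} (hS : Algebra.adjoin R S = ⊤)
    (g : V →ₗ[R] W) (hg : ∀ s ∈ S, ∀ x, g (s • x) = s • g x) (a : A) (x : V) :
    g (a • x) = a • g x := by
  have ha : a ∈ Algebra.adjoin R S := hS ▸ Algebra.mem_top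
  induction ha using Algebra.adjoin_induction generalizing x with
  | mem s hs => exact hg s hs x
  | algebraMap c => rw [algebraMap_smul, algebraMap_smul, map_smul]
  | add a b _ _ iha ihb => rw [add_smul, add_smul, map_add, iha, ihb]
  | mul a b _ _ iha ihb => rw [mul_smul, mul_smul, iha, ihb]

end CommutingMaps

theorem map_smul_of_mul_eq_one {A V W : Type*} [Monoid A] [MulAction A V] [MulAction A W]
    (g : V → W) {a b : A} (hba : b * a = 1) (hab : a * b = 1) (ha : ∀ x, g (a • x) = a • g x)
    (x : V) : g (b • x) = b • g x :=
  calc g (b • x) = b • a • g (b • x) := by rw [← mul_smul, hba, one_smul]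
    _ = b • g x := by rw [← ha, ← mul_smul, hab, one_smul]

theorem zpow_eq_zpow_of_modEq {K : Type*} [GroupWithZero K] {x : K} {n : ℕ}
    (hxn : x ^ n = 1) {a b : ℤ} (h : a ≡ b [ZMOD n]) : x ^ a = x ^ b := by
  rcases eq_or_ne x 0 with rfl | hx
  · obtain rfl : n = 0 := zero_pow_eq_one₀.mp hxn
    rw [show a = b by simpa [Int.ModEq] using h]
  obtain ⟨c, hc⟩ := h.dvd
  rw [show b = a + n * c by omega, zpow_add₀ hx, zpow_mul, zpow_natCast, hxn, one_zpow, mul_one]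

theorem Int.eq_and_modEq_of_sq_dvd {n : ℕ} (hn : Odd n) {t t' : ℕ} (ht : t < n) (ht' : t' < n)
    {r r' : ℤ} (h : (n : ℤ) ^ 2 ∣ t + n * (2 * r) - (t' + n * (2 * r'))) :
    t = t' ∧ r ≡ r' [ZMOD n] := by
  have htt' : t = t' := by
    have hdvd : (n : ℤ) ∣ t - t' := by
      have := (Dvd.intro_left _ (sq (n : ℤ)).symm).trans h
      rwa [show (t : ℤ) + n * (2 * r) - (t' + n * (2 * r')) = t - t' + n * (2 * (r - r')) by ring,
        dvd_add_left (dvd_mul_right _ _)] at this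
    have := Int.eq_zero_of_abs_lt_dvd hdvd (by rw [abs_lt]; omega)
    omega
  subst htt'
  refine ⟨rfl, Int.modEq_iff_dvd.mpr ?_⟩
  have h2 : (n : ℤ) ∣ 2 * (r' - r) := by
    rw [sq, show (t : ℤ) + n * (2 * r) - (t + n * (2 * r')) = n * -(2 * (r' - r)) by ring] at h
    exact dvd_neg.mp (Int.dvd_of_mul_dvd_mul_left (by omega) h)
  have hcop : IsCoprime (n : ℤ) 2 := by
    exact_mod_cast Nat.isCoprime_iff_coprime.mpr hn.coprime_two_right
  exact hcop.dvd_of_dvd_mul_left h2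

namespace SmallQuasiQuantumGroup

variable (k : Type) [Field k]

section Generators

variable {k} {n : ℕ} {q : k}

theorem gKi_mul_gK : gKi k n q * gK k n q = 1 := by
  have h := RingQuot.mkAlgHom_rel k (QGRel.KinvK (k := k) (n := n) (q := q))
  rwa [map_mul, map_one] at h

theorem gK_mul_gKi : gK k n q * gKi k n q = 1 := by
  have h := RingQuot.mkAlgHom_rel k (QGRel.KKinv (k := k) (n := n) (q := q))
  rwa [map_mul, map_one] at h

theorem adjoin_generators : Algebra.adjoin k {gE k n q, gF k n q, gK k n q, gKi k n q} = ⊤ := by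
  refine Algebra.eq_top_iff.mpr fun x => ?_
  obtain ⟨a, rfl⟩ := RingQuot.mkAlgHom_surjective k (QGRel k n q) x
  induction a using FreeAlgebra.induction with
  | grade0 c => rw [AlgHom.commutes]; exact Subalgebra.algebraMap_mem _ c
  | grade1 i =>
    apply Algebra.subset_adjoin
    fin_cases i
    · exact Set.mem_insert _ _
    · exact Set.mem_insert_of_mem _ (Set.mem_insert _ _)
    · exact Set.mem_insert_of_mem _ (Set.mem_insert_of_mem _ (Set.mem_insert _ _))
    · exact Set.mem_insert_of_mem _ (Set.mem_insert_of_mem _ (Set.mem_insert_of_mem _ rfl))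
  | mul a b ha hb => rw [map_mul]; exact mul_mem ha hb
  | add a b ha hb => rw [map_add]; exact add_mem ha hb

end Generators

section TypeV

variable {k} {n : ℕ} {Q : k}

def weightK (n : ℕ) (Q : k) (t : ℕ) (r : ℤ) : k := Q ^ (t : ℤ) * (Q ^ n) ^ (2 * r)

theorem eq_and_modEq_of_weightK_eq (hQ : IsPrimitiveRoot Q (n ^ 2)) (hn : Odd n) {t t' : ℕ}
    (ht : t < n) (ht' : t' < n) {r r' : ℤ} (h : weightK n Q t r = weightK n Q t' r') :
    t = t' ∧ r ≡ r' [ZMOD n] := by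
  have hQ0 : Q ≠ 0 := hQ.ne_zero (by positivity [hn.pos])
  have hweight : ∀ t r, weightK n Q t r = Q ^ ((t : ℤ) + n * (2 * r)) := fun t r => by
    rw [weightK, zpow_add₀ hQ0, zpow_mul Q (n : ℤ), zpow_natCast Q n]
  rw [hweight, hweight, ← div_eq_one_iff_eq (zpow_ne_zero _ hQ0), ← zpow_sub₀ hQ0,
    hQ.zpow_eq_one_iff_dvd] at h
  exact Int.eq_and_modEq_of_sq_dvd hn ht ht' (by exact_mod_cast h)

theorem gammaCoef_congr (hq : (Q ^ n) ^ n = 1) {t : ℕ} {r r' : ℤ} (hr : r ≡ r' [ZMOD n])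
    (j : ℕ) : gammaCoef k n Q t r j = gammaCoef k n Q t r' j := by
  have h₁ := hr.mul_left 2
  have h₂ := (hr.add_right (j : ℤ)).mul_left 2
  unfold gammaCoef
  rw [zpow_eq_zpow_of_modEq hq h₁, zpow_eq_zpow_of_modEq hq h₁.neg, zpow_eq_zpow_of_modEq hq h₂,
    zpow_eq_zpow_of_modEq hq h₂.neg]

variable {t : ℕ} {r : ℤ} {V : Type} [AddCommGroup V] [Module k V] [Module (QG k n (Q ^ n)) V]

theorem IsTypeV.of_modEq (hV : IsTypeV k n Q t r V) (hq : (Q ^ n) ^ n = 1) {r' : ℤ}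
    (hr : r ≡ r' [ZMOD n]) : IsTypeV k n Q t r' V := by
  obtain ⟨v, hK, hE, hF₀, hF⟩ := hV
  refine ⟨v, fun i => ?_, hE, hF₀, fun i hi => ?_⟩
  · rw [hK, zpow_eq_zpow_of_modEq hq ((hr.add_right _).mul_left 2)]
  · rw [hF i hi, gammaCoef_congr hq hr]

variable [IsScalarTower k (QG k n (Q ^ n)) V]

theorem IsTypeV.gK_smul_of_gE_smul_eq_zero (hV : IsTypeV k n Q t r V) {x : V}
    (hx : gE k n (Q ^ n) • x = 0) : gK k n (Q ^ n) • x = weightK n Q t (r + (n - 1 : ℕ)) • x := by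
  obtain ⟨v, hK, hE, -, -⟩ := hV
  cases n with
  | zero => simp [show x = 0 by rw [← v.sum_repr x]; simp]
  | succ m =>
    have hshift : ∑ j : Fin m, v.repr x j.castSucc • v j.succ = 0 := by
      calc ∑ j : Fin m, v.repr x j.castSucc • v j.succ
          = gE k (m + 1) (Q ^ (m + 1)) • ∑ i, v.repr x i • v i := by
            rw [Finset.smul_sum, Fin.sum_univ_castSucc]
            simp only [smul_comm (gE k (m + 1) (Q ^ (m + 1))) (v.repr x _), hE]
            simp [Fin.succ]
        _ = 0 := by rw [v.sum_repr, hx]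
    have hc : ∀ j : Fin m, v.repr x j.castSucc = 0 := Fintype.linearIndependent_iff.mp
      (v.linearIndependent.comp _ (Fin.succ_injective m)) _ hshift
    have hx' : x = v.repr x (Fin.last m) • v (Fin.last m) := by
      calc x = ∑ i, v.repr x i • v i := (v.sum_repr x).symm
        _ = _ := by
          simp only [Fin.sum_univ_castSucc, hc, zero_smul, Finset.sum_const_zero, zero_add]
    rw [hx', smul_comm, hK, smul_comm]
    simp [weightK]

variable {t' : ℕ} {r' : ℤ} {W : Type} [AddCommGroup W] [Module k W] [Module (QG k n (Q ^ n)) W]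
  [IsScalarTower k (QG k n (Q ^ n)) W]

theorem IsTypeV.weightK_eq_of_linearEquiv (hV : IsTypeV k n Q t r V) (hW : IsTypeV k n Q t' r' W)
    (f : V ≃ₗ[QG k n (Q ^ n)] W) (hn : 0 < n) :
    weightK n Q t (r + (n - 1 : ℕ)) = weightK n Q t' (r' + (n - 1 : ℕ)) := by
  obtain ⟨v, hK, hE, -, -⟩ := hV
  let g := f.restrictScalars k
  have hg : ∀ (a : QG k n (Q ^ n)) y, g (a • y) = a • g y := f.map_smul
  let top : Fin n := ⟨n - 1, by omega⟩
  have hx : g (v top) ≠ 0 := g.map_ne_zero_iff.mpr (v.ne_zero top)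
  have hEx : gE k n (Q ^ n) • g (v top) = 0 := by
    rw [← hg, hE, dif_neg (by simp only [top]; omega), map_zero]
  have hKx := hW.gK_smul_of_gE_smul_eq_zero hEx
  rw [← hg, hK, map_smul] at hKx
  exact smul_left_injective k hx hKx

theorem IsTypeV.nonempty_linearEquiv (hV : IsTypeV k n Q t r V) (hW : IsTypeV k n Q t r W) :
    Nonempty (V ≃ₗ[QG k n (Q ^ n)] W) := by
  obtain ⟨v, hvK, hvE, hvF₀, hvF⟩ := hV
  obtain ⟨w, hwK, hwE, hwF₀, hwF⟩ := hW
  let g : V ≃ₗ[k] W := v.equiv w (Equiv.refl _)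
  have hg : ∀ i, g (v i) = w i := fun i => by simp [g]
  have hK : ∀ x, g (gK k n (Q ^ n) • x) = gK k n (Q ^ n) • g x :=
    g.toLinearMap.map_smul_of_map_smul_basis v _ fun i => by
      simp only [LinearEquiv.coe_coe, hvK, map_smul, hg, hwK]
  have hcomm : ∀ a ∈ ({gE k n (Q ^ n), gF k n (Q ^ n), gK k n (Q ^ n), gKi k n (Q ^ n)} : Set _),
      ∀ x, g (a • x) = a • g x := by
    simp only [Set.mem_insert_iff, Set.mem_singleton_iff, forall_eq_or_imp, forall_eq]
    refine ⟨g.toLinearMap.map_smul_of_map_smul_basis v _ fun i => ?_,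
      g.toLinearMap.map_smul_of_map_smul_basis v _ fun i => ?_, hK,
      map_smul_of_mul_eq_one g gKi_mul_gK gK_mul_gKi hK⟩
    · simp only [LinearEquiv.coe_coe, hvE, hg, hwE]
      split_ifs <;> simp [hg]
    · rcases Nat.eq_zero_or_pos i.1 with h0 | hpos
      · simp only [LinearEquiv.coe_coe, hvF₀ i h0, hg, hwF₀ i h0, map_zero]
      · simp only [LinearEquiv.coe_coe, hvF i hpos, map_smul, hg, hwF i hpos]
  exact ⟨{ g with map_smul' := g.toLinearMap.map_smul_of_adjoin_eq_top adjoin_generators hcomm }⟩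

end TypeV

theorem statement5 (n : ℕ) (hodd : Odd n)
    (Q : k) (hQ : IsPrimitiveRoot Q (n ^ 2)) (t t' : ℕ) (ht : t ≤ n - 1)
    (ht' : t' ≤ n - 1) (r r' : ℤ)
    (V : Type) [AddCommGroup V] [Module k V] [Module (QG k n (Q ^ n)) V]
    [IsScalarTower k (QG k n (Q ^ n)) V] (hV : IsTypeV k n Q t r V)
    (W : Type) [AddCommGroup W] [Module k W] [Module (QG k n (Q ^ n)) W]
    [IsScalarTower k (QG k n (Q ^ n)) W] (hW : IsTypeV k n Q t' r' W) :
    Nonempty (V ≃ₗ[QG k n (Q ^ n)] W) ↔ t = t' ∧ r ≡ r' [ZMOD (n : ℤ)] := by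
  have hn := hodd.pos
  constructor
  · rintro ⟨f⟩
    obtain ⟨rfl, hr⟩ := eq_and_modEq_of_weightK_eq hQ hodd (by omega) (by omega)
      (hV.weightK_eq_of_linearEquiv hW f hn)
    exact ⟨rfl, Int.ModEq.add_right_cancel' _ hr⟩
  · rintro ⟨rfl, hr⟩
    have hq : (Q ^ n) ^ n = 1 := by rw [← pow_mul, ← sq, hQ.pow_eq_one]
    exact (hV.of_modEq hq hr).nonempty_linearEquiv hW

end SmallQuasiQuantumGroup
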